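/- In (d+1)-dimensional Minkowski spacetime with d ≥ 2, there exist three events (x_A,t_A), (x_B,t_B), (x_C,t_C) and times t' > t > t_B such that the time-t slice of L_>(x_A,t_A) ∩ L_>(x_C,t_C) is contained in the time-t slice of L_>(x_B,t_B), but the time-t' slice of L_>(x_A,t_A) ∩ L_>(x_C,t_C) is not contained in the time-t' slice of L_>(x_B,t_B). Concretely, for a > 0, the events x_A = (-a,0,...,0), x_C = (a,0,...,0) at time 0, and x_B = (0,...,0) at time a/2, with a < t ≤ 5a/4 and t' > 5a/4, provide such an example. -/

import Mathlib

/-!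
Write `e = (a,0,…,0)`. By the parallelogram law, a point `x` within distance `t` of both `±e`
satisfies `‖x‖² ≤ t² - a²`, with equality for the points `x ⊥ e` with `‖x‖² = t² - a²`. So the
slice of the intersection lies in the ball of radius `√(t² - a²)` about `0` and meets its
boundary, while the slice of the cone from `(0, a/2)` is the ball of radius `t - a/2`. Since
`(t - a/2)² - (t² - a²) = a (5a/4 - t)`, the first ball lies in the second exactly when
`t ≤ 5a/4`. A point orthogonal to `e` needs a second spatial coordinate, hence `d ≥ 2`.
-/

/-- The (strict) future lightcone of an event in (d+1)D Minkowski spacetime. -/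
def futureCone {d : ℕ} (x0 : EuclideanSpace ℝ (Fin d)) (t0 : ℝ) :
    Set (EuclideanSpace ℝ (Fin d) × ℝ) :=
  {p | ‖p.1 - x0‖ ≤ p.2 - t0 ∧ t0 < p.2}

/-- The time-`t` slice of a subset of (d+1)D Minkowski spacetime. -/
def timeSlice {d : ℕ} (S : Set (EuclideanSpace ℝ (Fin d) × ℝ)) (t : ℝ) :
    Set (EuclideanSpace ℝ (Fin d)) := {x | (x, t) ∈ S}

theorem norm_sq_add_norm_sq_le_of_norm_add_le_of_norm_sub_le {E : Type*}
    [NormedAddCommGroup E] [InnerProductSpace ℝ E] {x e : E} {t : ℝ}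
    (hadd : ‖x + e‖ ≤ t) (hsub : ‖x - e‖ ≤ t) : ‖x‖ ^ 2 + ‖e‖ ^ 2 ≤ t ^ 2 := by
  have hpar := parallelogram_law_with_norm ℝ x e
  nlinarith [norm_nonneg (x + e), norm_nonneg (x - e)]

theorem inner_single_single_of_ne {ι : Type*} [Fintype ι] [DecidableEq ι] {i j : ι}
    (h : i ≠ j) (a b : ℝ) :
    inner ℝ (EuclideanSpace.single i a) (EuclideanSpace.single j b) = 0 := by
  simp [EuclideanSpace.inner_single_left, h]

section Slices

variable {d : ℕ}

@[simp]
theorem mem_timeSlice_futureCone {x x0 : EuclideanSpace ℝ (Fin d)} {t0 t : ℝ} :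
    x ∈ timeSlice (futureCone x0 t0) t ↔ ‖x - x0‖ ≤ t - t0 ∧ t0 < t :=
  Iff.rfl

theorem timeSlice_inter_futureCone_subset {e : EuclideanSpace ℝ (Fin d)} {t : ℝ}
    (ht₁ : ‖e‖ / 2 < t) (ht₂ : t ≤ 5 * ‖e‖ / 4) :
    timeSlice (futureCone (-e) 0 ∩ futureCone e 0) t ⊆ timeSlice (futureCone 0 (‖e‖ / 2)) t := by
  rintro x ⟨⟨hA, -⟩, ⟨hC, -⟩⟩
  simp only [sub_neg_eq_add, sub_zero] at hA hC
  have hx := norm_sq_add_norm_sq_le_of_norm_add_le_of_norm_sub_le hA hC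
  refine mem_timeSlice_futureCone.2 ⟨?_, ht₁⟩
  rw [sub_zero]
  nlinarith [norm_nonneg x, norm_nonneg e]

theorem not_timeSlice_inter_futureCone_subset {e y : EuclideanSpace ℝ (Fin d)} {t : ℝ}
    (he : e ≠ 0) (hye : inner ℝ y e = 0) (hy : ‖y‖ ^ 2 + ‖e‖ ^ 2 = t ^ 2) (ht : 5 * ‖e‖ / 4 < t) :
    ¬ timeSlice (futureCone (-e) 0 ∩ futureCone e 0) t ⊆ timeSlice (futureCone 0 (‖e‖ / 2)) t := by
  have ht₀ : 0 < t := by linarith [norm_nonneg e]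
  have hdist : ∀ z : EuclideanSpace ℝ (Fin d), ‖z‖ * ‖z‖ = t ^ 2 → ‖z‖ ≤ t := fun z hz ↦ by
    nlinarith [norm_nonneg z]
  have hmem : y ∈ timeSlice (futureCone (-e) 0 ∩ futureCone e 0) t := by
    refine ⟨⟨?_, ht₀⟩, ⟨?_, ht₀⟩⟩ <;> rw [sub_zero]
    · rw [sub_neg_eq_add]
      exact hdist _ (by rw [norm_add_sq_eq_norm_sq_add_norm_sq_real hye, ← hy]; ring)
    · exact hdist _ (by rw [norm_sub_sq_eq_norm_sq_add_norm_sq_real hye, ← hy]; ring)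
  intro hsub
  obtain ⟨hle, -⟩ := mem_timeSlice_futureCone.1 (hsub hmem)
  rw [sub_zero] at hle
  nlinarith [norm_pos_iff.2 he, mul_self_le_mul_self (norm_nonneg y) hle]

end Slices

/-- In `d ≥ 2` spatial dimensions, containment of the slice of the intersection of two
lightcones in the slice of a third at one time does not propagate to later times:
the concrete configuration `x_A = (-a,0,…,0)`, `x_C = (a,0,…,0)` at time `0` and
`x_B = 0` at time `a/2` is contained at any time `a < t ≤ 5a/4` but not at `t' > 5a/4`. -/
theorem slice_containment_fails_higher_dim {d : ℕ} (hd : 2 ≤ d) (a t t' : ℝ)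
    (ha : 0 < a) (ht1 : a < t) (ht2 : t ≤ 5 * a / 4) (ht' : 5 * a / 4 < t') :
    a / 2 < t ∧ t < t' ∧
    (timeSlice (futureCone (EuclideanSpace.single (⟨0, by omega⟩ : Fin d) (-a)) 0 ∩
        futureCone (EuclideanSpace.single (⟨0, by omega⟩ : Fin d) a) 0) t
      ⊆ timeSlice (futureCone (0 : EuclideanSpace ℝ (Fin d)) (a / 2)) t) ∧
    ¬ (timeSlice (futureCone (EuclideanSpace.single (⟨0, by omega⟩ : Fin d) (-a)) 0 ∩
        futureCone (EuclideanSpace.single (⟨0, by omega⟩ : Fin d) a) 0) t'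
      ⊆ timeSlice (futureCone (0 : EuclideanSpace ℝ (Fin d)) (a / 2)) t') := by
  set e := EuclideanSpace.single (⟨0, by omega⟩ : Fin d) a
  have he : ‖e‖ = a := by simp [e, ha.le]
  have hneg : EuclideanSpace.single (⟨0, by omega⟩ : Fin d) (-a) = -e := PiLp.single_neg ..
  rw [hneg, ← he]
  refine ⟨by linarith, by linarith,
    timeSlice_inter_futureCone_subset (by linarith) (by linarith), ?_⟩
  have hs : Real.sqrt (t' ^ 2 - a ^ 2) ^ 2 = t' ^ 2 - a ^ 2 := Real.sq_sqrt (by nlinarith)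
  refine not_timeSlice_inter_futureCone_subset
    (y := EuclideanSpace.single ⟨1, hd⟩ (Real.sqrt (t' ^ 2 - a ^ 2)))
    (norm_pos_iff.1 (by linarith)) (inner_single_single_of_ne (by simp [Fin.ext_iff]) _ _)
    ?_ (by linarith)
  simp [hs, he]
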